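/- Let p : ℝⁿ → ℝ be continuously differentiable and everywhere positive, let F : ℝⁿ → ℝⁿ be a continuously differentiable vector field, and let u : ℝⁿ → ℝ be continuously differentiable, such that the product x ↦ u(x)·F(x) has compact support. Then ∫ ⟨F(x), ∇u(x)⟩ p(x) dx = − ∫ [ (div F)(x) + ⟨∇log p(x), F(x)⟩ ] u(x) p(x) dx, where div F = Σ_{d=1}^{n} ∂F_d/∂x_d and the integrals are with respect to Lebesgue measure on ℝⁿ. -/

import Mathlib

open MeasureTheory
open scoped RealInnerProductSpace

/-- The divergence `div F = Σ_d ∂F_d/∂x_d` of a vector field on `ℝⁿ`. -/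
noncomputable def diverg {n : ℕ}
    (F : EuclideanSpace ℝ (Fin n) → EuclideanSpace ℝ (Fin n))
    (x : EuclideanSpace ℝ (Fin n)) : ℝ :=
  ∑ d : Fin n, fderiv ℝ F x (EuclideanSpace.single d 1) d

/-!
Apply `∫ div G = 0`, valid for every compactly supported `C¹` vector field `G`, to `G = (u p) • F`.
By the product rule and `∇p = p ∇log p`,
`div G = ⟨F, ∇u⟩ p + (div F + ⟨∇log p, F⟩) u p`, so the two integrals differ only by a sign.
Integrability of `⟨F, ∇u⟩ p` comes from its support: near a point outside `tsupport (u • F)`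
either `F` stays nonzero, forcing `u`, hence `∇u`, to vanish there, or `F` vanishes at the point.
-/

open Filter Topology

section IntegralFDeriv

variable {E V : Type*} [NormedAddCommGroup E] [NormedSpace ℝ E] [FiniteDimensional ℝ E]
  [MeasurableSpace E] [BorelSpace E] {μ : Measure E} [μ.IsAddHaarMeasure]
  [NormedAddCommGroup V] [NormedSpace ℝ V]

theorem integral_fderiv_apply_eq_zero {g : E → V} (hg : ContDiff ℝ 1 g)
    (hgs : HasCompactSupport g) (v : E) :
    ∫ x, fderiv ℝ g x v ∂μ = 0 := by
  have hg' : Integrable (fun x => fderiv ℝ g x v) μ :=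
    ((hg.continuous_fderiv one_ne_zero).clm_apply continuous_const).integrable_of_hasCompactSupport
      (hgs.fderiv_apply ℝ v)
  simpa using integral_smul_fderiv_eq_neg_fderiv_smul_of_integrable (μ := μ)
    (f := fun _ => (1 : ℝ)) (g := g) (v := v) (by simp) (by simpa using hg')
    (by simpa using hg.continuous.integrable_of_hasCompactSupport hgs)
    (fun _ _ => differentiableAt_const _) (fun x _ => hg.differentiable one_ne_zero x)

end IntegralFDeriv

theorem eventually_eq_zero_or_eq_zero_of_notMem_tsupport_smul {X 𝕜 V : Type*}
    [TopologicalSpace X] [DivisionRing 𝕜] [AddCommGroup V] [Module 𝕜 V]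
    {u : X → 𝕜} {F : X → V} {x : X} (hx : x ∉ tsupport fun y => u y • F y) :
    ∀ᶠ y in 𝓝 x, u y = 0 ∨ F y = 0 :=
  (notMem_tsupport_iff_eventuallyEq.mp hx).mono fun _ hy => smul_eq_zero.mp hy

section Support

variable {𝕜 E V : Type*} [NontriviallyNormedField 𝕜] [NormedAddCommGroup E] [NormedSpace 𝕜 E]
  [NormedAddCommGroup V] [NormedSpace 𝕜 V]

theorem fderiv_eq_zero_of_eventually_or_eq_zero {W : Type*} [NormedAddCommGroup W]
    {f : E → V} {g : E → W} {x : E}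
    (hg : ContinuousAt g x) (hgx : g x ≠ 0) (h : ∀ᶠ y in 𝓝 x, f y = 0 ∨ g y = 0) :
    fderiv 𝕜 f x = 0 := by
  have hf : f =ᶠ[𝓝 x] fun _ => 0 :=
    (h.and (hg.eventually_ne hgx)).mono fun _ hy => hy.1.resolve_right hy.2
  rw [hf.fderiv_eq, fderiv_const_apply]

theorem HasCompactSupport.fderiv_apply_of_smul {u : E → 𝕜} {F : E → E}
    (hsupp : HasCompactSupport fun y => u y • F y) (hF : Continuous F) :
    HasCompactSupport fun x => fderiv 𝕜 u x (F x) := by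
  refine hsupp.mono' (Function.support_subset_iff'.mpr fun x hx => ?_)
  by_cases hFx : F x = 0
  · rw [hFx, map_zero]
  · rw [fderiv_eq_zero_of_eventually_or_eq_zero hF.continuousAt hFx
      (eventually_eq_zero_or_eq_zero_of_notMem_tsupport_smul hx), zero_apply]

end Support

theorem mul_inner_gradient_log {E : Type*} [NormedAddCommGroup E] [InnerProductSpace ℝ E]
    [CompleteSpace E] {p : E → ℝ} {x : E} (hp : DifferentiableAt ℝ p x) (hpx : p x ≠ 0) (v : E) :
    p x * ⟪gradient (fun y => Real.log (p y)) x, v⟫ = fderiv ℝ p x v := by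
  rw [inner_gradient_left, (hp.hasFDerivAt.log hpx).fderiv, smul_apply, smul_eq_mul,
    ← mul_assoc, mul_inv_cancel₀ hpx, one_mul]

section Divergence

variable {n : ℕ} {G : EuclideanSpace ℝ (Fin n) → EuclideanSpace ℝ (Fin n)}

theorem continuous_diverg (hG : ContDiff ℝ 1 G) : Continuous (diverg G) :=
  continuous_finsetSum _ fun d _ => (EuclideanSpace.proj (𝕜 := ℝ) d).continuous.comp
    ((hG.continuous_fderiv one_ne_zero).clm_apply continuous_const)

theorem HasCompactSupport.diverg (hG : HasCompactSupport G) : HasCompactSupport (diverg G) :=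
  (hG.fderiv ℝ).mono <| Function.support_subset_iff'.mpr fun x hx => by
    rw [_root_.diverg, Function.notMem_support.mp hx]
    simp

theorem integral_diverg_eq_zero (hG : ContDiff ℝ 1 G) (hGs : HasCompactSupport G) :
    ∫ x, diverg G x = 0 := by
  have hint (v : EuclideanSpace ℝ (Fin n)) : Integrable fun x => fderiv ℝ G x v :=
    ((hG.continuous_fderiv one_ne_zero).clm_apply continuous_const).integrable_of_hasCompactSupport
      (hGs.fderiv_apply ℝ v)
  unfold diverg
  rw [integral_finsetSum _ fun d _ => ((EuclideanSpace.proj (𝕜 := ℝ) d).integrable_comp (hint _) :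
    Integrable fun x => fderiv ℝ G x (EuclideanSpace.single d 1) d)]
  refine Finset.sum_eq_zero fun d _ => ?_
  calc ∫ x, fderiv ℝ G x (EuclideanSpace.single d 1) d
      = EuclideanSpace.proj d (∫ x, fderiv ℝ G x (EuclideanSpace.single d 1)) :=
        (EuclideanSpace.proj d).integral_comp_comm (hint _)
    _ = 0 := by rw [integral_fderiv_apply_eq_zero hG hGs, map_zero]

theorem diverg_smul {f : EuclideanSpace ℝ (Fin n) → ℝ} {x : EuclideanSpace ℝ (Fin n)}
    (hf : DifferentiableAt ℝ f x) (hG : DifferentiableAt ℝ G x) :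
    diverg (fun y => f y • G y) x = f x * diverg G x + fderiv ℝ f x (G x) := by
  have hG_coord : ∑ d, G x d • EuclideanSpace.single d (1 : ℝ) = G x := by
    simpa using (EuclideanSpace.basisFun (Fin n) ℝ).sum_repr (G x)
  conv_rhs => rw [← hG_coord]
  simp [diverg, fderiv_fun_smul hf hG, Finset.sum_add_distrib, Finset.mul_sum, mul_comm]

theorem diverg_mul_smul {u p : EuclideanSpace ℝ (Fin n) → ℝ} {x : EuclideanSpace ℝ (Fin n)}
    (hu : DifferentiableAt ℝ u x) (hp : DifferentiableAt ℝ p x) (hpx : p x ≠ 0)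
    (hG : DifferentiableAt ℝ G x) :
    diverg (fun y => (u y * p y) • G y) x = ⟪G x, gradient u x⟫ * p x
      + (diverg G x + ⟪gradient (fun y => Real.log (p y)) x, G x⟫) * u x * p x := by
  rw [diverg_smul (f := fun y => u y * p y) (hu.mul hp) hG, fderiv_fun_mul hu hp, add_apply,
    smul_apply, smul_apply, smul_eq_mul, smul_eq_mul, ← mul_inner_gradient_log hp hpx,
    inner_gradient_right, conj_trivial]
  ring

end Divergence

/-- **Weighted integration by parts against a positive density.** For a continuously
differentiable, everywhere positive `p : ℝⁿ → ℝ`, a continuously differentiable vector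
field `F`, and a continuously differentiable `u : ℝⁿ → ℝ` such that `u·F` has compact
support, `∫ ⟨F, ∇u⟩ p dx = − ∫ (div F + ⟨∇log p, F⟩) u p dx`. -/
theorem weighted_integration_by_parts
    (n : ℕ)
    (p : EuclideanSpace ℝ (Fin n) → ℝ)
    (hp : ContDiff ℝ 1 p) (hppos : ∀ x, 0 < p x)
    (F : EuclideanSpace ℝ (Fin n) → EuclideanSpace ℝ (Fin n))
    (hF : ContDiff ℝ 1 F)
    (u : EuclideanSpace ℝ (Fin n) → ℝ)
    (hu : ContDiff ℝ 1 u)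
    (hsupp : HasCompactSupport (fun x => u x • F x)) :
    ∫ x, ⟪F x, gradient u x⟫ * p x
      = -∫ x, (diverg F x + ⟪gradient (fun y => Real.log (p y)) x, F x⟫) * u x * p x := by
  set G := fun x => (u x * p x) • F x
  have hG : ContDiff ℝ 1 G := (hu.mul hp).smul hF
  have hGs : HasCompactSupport G := by
    convert hsupp.smul_left (f := p) using 1
    funext x
    simp only [G, Pi.smul_apply', mul_smul, smul_comm (u x) (p x)]
  have hA : Integrable fun x => ⟪F x, gradient u x⟫ * p x := by
    simp_rw [inner_gradient_right, conj_trivial]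
    exact (((hu.continuous_fderiv one_ne_zero).clm_apply hF.continuous).mul
      hp.continuous).integrable_of_hasCompactSupport
      (hsupp.fderiv_apply_of_smul hF.continuous).mul_right
  have hdivG (x) := diverg_mul_smul (hu.differentiable one_ne_zero x)
    (hp.differentiable one_ne_zero x) (hppos x).ne' (hF.differentiable one_ne_zero x)
  calc ∫ x, ⟪F x, gradient u x⟫ * p x
      = (∫ x, ⟪F x, gradient u x⟫ * p x) - ∫ x, diverg G x := by
        rw [integral_diverg_eq_zero hG hGs, sub_zero]
    _ = -∫ x, (diverg G x - ⟪F x, gradient u x⟫ * p x) := by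
        rw [integral_sub ((continuous_diverg hG).integrable_of_hasCompactSupport hGs.diverg) hA,
          neg_sub]
    _ = _ := by simp_rw [G, hdivG, add_sub_cancel_left]
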